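/- A simplicial complex over a finite set I with |I| ≥ 2 generates the language Ev_I of binary strings with an even number of 1's if and only if it is connected. Consequently, the minimal complexes generating Ev_I are exactly the spanning trees of I. -/

import Mathlib

/-!
If no simplex of `K_f` meets both `I₀` and `I₀ᶜ`, the outputs on the two sides read disjoint sets
of inputs, so any two words of the image can be spliced along `I₀`; splicing `0` with `e_k + e_i`
(`k ∈ I₀`, `i ∉ I₀`) gives the odd word `e_i`. Conversely, label the edges of the 1-skeleton of a
connected complex by `ZMod 2` and let each vertex output the parity of the labels at it: every
output reads only the edges at its vertex, and over characteristic two the incidence matrix of a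
connected graph has range `{v | ∑ i, v i = 0}`, since `v = ∑ i, v i • (e_i + e_{i₀})` for such `v`.
For minimality, a generating subcomplex contains every vertex and has a connected 1-skeleton, and
trees are exactly the minimal connected graphs.
-/

/-- `W` determines output coordinate `i` of `f`: the value `f x i` only
depends on the restriction of `x` to `W`. -/
def Determines {B J A I : Type*} (f : (J → B) → (I → A)) (i : I) (W : Set J) : Prop :=
  ∀ x y : J → B, (∀ j ∈ W, x j = y j) → f x i = f y i

/-- The input window of output coordinate `i`: the intersection of all
determining sets (which, for finite data, is the smallest determining set). -/
def window {B J A I : Type*} (f : (J → B) → (I → A)) (i : I) : Set J :=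
  ⋂₀ {W : Set J | Determines f i W}

/-- The dual window of an input coordinate `j`. -/
def dualWindow {B J A I : Type*} (f : (J → B) → (I → A)) (j : J) : Set I :=
  {i : I | j ∈ window f i}

/-- The communication complex of `f`: `S ∈ K_f` iff `⋂_{i ∈ S} W_f(i) ≠ ∅`
(the empty intersection being all of `J`). -/
def commComplex {B J A I : Type*} (f : (J → B) → (I → A)) : Set (Set I) :=
  {S : Set I | (⋂ i ∈ S, window f i).Nonempty}

/-- A complex `K` over `I` generates the language `L ⊆ A^I` if some function
`f : B^J → A^I` (with `B, J` finite, `J` nonempty) has image `L` and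
communication complex contained in `K`. -/
def Generates {A I : Type*} (K : Set (Set I)) (L : Set (I → A)) : Prop :=
  ∃ (B J : Type) (_ : Finite B) (_ : Finite J) (_ : Nonempty J)
    (f : (J → B) → (I → A)), Set.range f = L ∧ commComplex f ⊆ K

/-- A complex is connected if no nontrivial partition of the vertex set splits
all of its simplices. -/
def ConnectedComplex {I : Type*} (K : Set (Set I)) : Prop :=
  ¬ ∃ I0 : Set I, I0 ≠ ∅ ∧ I0 ≠ Set.univ ∧ ∀ S ∈ K, S ⊆ I0 ∨ S ⊆ I0ᶜ

/-- A simplicial complex: a downward closed collection of subsets. -/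
def IsComplex {I : Type*} (K : Set (Set I)) : Prop :=
  ∀ S ∈ K, ∀ T ⊆ S, T ∈ K

/-- The 1-skeleton of a complex, as a simple graph. -/
def skeletonGraph {I : Type*} (K : Set (Set I)) : SimpleGraph I :=
  SimpleGraph.fromRel (fun i j => ({i, j} : Set I) ∈ K)

/-- The complex associated to a graph: the empty set, the singletons, and the
edges. -/
def treeComplex {I : Type*} (G : SimpleGraph I) : Set (Set I) :=
  {S | S = ∅ ∨ (∃ i, S = {i}) ∨ ∃ i j, G.Adj i j ∧ S = ({i, j} : Set I)}

/-- The maximal simplices of a complex. -/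
def maxSimplices {I : Type*} (K : Set (Set I)) : Set (Set I) :=
  {S | S ∈ K ∧ ∀ T ∈ K, S ⊆ T → S = T}

/-- The image `f_*(K)` of a complex `K` on the input coordinates of `f`:
generated by the unions of dual windows over simplices of `K`. -/
def pushComplex {B J A I : Type*} (f : (J → B) → (I → A)) (K : Set (Set J)) : Set (Set I) :=
  {T : Set I | ∃ S ∈ K, T ⊆ ⋃ j ∈ S, dualWindow f j}


/-- The language of binary strings with an even number of `1`s. -/
def EvLang (I : Type) [Fintype I] [DecidableEq I] : Set (I → Bool) :=
  {x | Even (Finset.univ.filter (fun i => x i = true)).card}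

section Window

variable {B J A I : Type*} {f : (J → B) → (I → A)} {i : I}

theorem Determines.mono {W W' : Set J} (h : Determines f i W) (hWW' : W ⊆ W') :
    Determines f i W' :=
  fun x y hxy => h x y fun j hj => hxy j (hWW' hj)

theorem Determines.inter {W W' : Set J} (h : Determines f i W) (h' : Determines f i W') :
    Determines f i (W ∩ W') := by
  classical
  intro x y hxy
  calc f x i = f (W.piecewise x y) i := h _ _ fun j hj => (Set.piecewise_eq_of_mem _ _ _ hj).symm
    _ = f y i := h' _ _ fun j hj => by
      by_cases hjW : j ∈ W
      · rw [Set.piecewise_eq_of_mem _ _ _ hjW, hxy j ⟨hjW, hj⟩]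
      · rw [Set.piecewise_eq_of_notMem _ _ _ hjW]

theorem determines_univ (f : (J → B) → (I → A)) (i : I) : Determines f i Set.univ :=
  fun _ _ hxy => congrArg (f · i) (funext fun j => hxy j trivial)

/-- `window f i` is the kernel of this filter, so for finite `J` it is itself determining. -/
def determiningFilter (f : (J → B) → (I → A)) (i : I) : Filter J where
  sets := {W | Determines f i W}
  univ_sets := determines_univ f i
  sets_of_superset := Determines.mono
  inter_sets := Determines.inter

theorem determines_window [Finite J] (f : (J → B) → (I → A)) (i : I) :
    Determines f i (window f i) :=
  (Filter.sInter_mem (f := determiningFilter f i) (Set.toFinite _)).2 fun _ h => h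

theorem window_subset_of_determines {W : Set J} (h : Determines f i W) : window f i ⊆ W :=
  Set.sInter_subset_of_mem h

/-- The windows of `I₀` and of `I₀ᶜ` are disjoint, so the two halves of the output can be
prescribed independently. -/
theorem piecewise_mem_range_of_splits [Finite J] {I₀ : Set I} [DecidablePred (· ∈ I₀)]
    (hsplit : ∀ S ∈ commComplex f, S ⊆ I₀ ∨ S ⊆ I₀ᶜ) (x y : J → B) :
    I₀.piecewise (f x) (f y) ∈ Set.range f := by
  classical
  have hdisj : ∀ i ∈ I₀, ∀ i' ∉ I₀, Disjoint (window f i) (window f i') := by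
    refine fun i hi i' hi' => Set.disjoint_left.2 fun j hj hj' => ?_
    have hpair : ({i, i'} : Set I) ∈ commComplex f :=
      ⟨j, Set.mem_iInter₂.2 fun k hk => by rcases hk with rfl | rfl <;> assumption⟩
    rcases hsplit _ hpair with h | h
    · exact hi' (h (by simp))
    · exact h (by simp) hi
  set U := ⋃ i ∈ I₀, window f i
  refine ⟨U.piecewise x y, funext fun i => ?_⟩
  by_cases hi : i ∈ I₀
  · rw [Set.piecewise_eq_of_mem _ _ _ hi]
    exact determines_window f i _ _ fun j hj =>
      Set.piecewise_eq_of_mem _ _ _ (Set.mem_biUnion hi hj)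
  · rw [Set.piecewise_eq_of_notMem _ _ _ hi]
    refine determines_window f i _ _ fun j hj => Set.piecewise_eq_of_notMem _ _ _ ?_
    simp only [U, Set.mem_iUnion, not_exists]
    exact fun i' hi' hj' => Set.disjoint_left.1 (hdisj i' hi' i hi) hj' hj

end Window

namespace Generates

variable {A I : Type*} {K : Set (Set I)} {L : Set (I → A)}

theorem piecewise_mem (h : Generates K L) {I₀ : Set I} [DecidablePred (· ∈ I₀)]
    (hsplit : ∀ S ∈ K, S ⊆ I₀ ∨ S ⊆ I₀ᶜ) {x y : I → A} (hx : x ∈ L) (hy : y ∈ L) :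
    I₀.piecewise x y ∈ L := by
  obtain ⟨B, J, _, _, _, f, rfl, hf⟩ := h
  obtain ⟨x, rfl⟩ := hx
  obtain ⟨y, rfl⟩ := hy
  exact piecewise_mem_range_of_splits (fun S hS => hsplit S (hf hS)) x y

theorem empty_mem (h : Generates K L) : ∅ ∈ K := by
  obtain ⟨B, J, _, _, _, f, -, hf⟩ := h
  exact hf (by simp [commComplex])

theorem singleton_mem (h : Generates K L) {x y : I → A} (hx : x ∈ L) (hy : y ∈ L) {i : I}
    (hxy : x i ≠ y i) : {i} ∈ K := by
  obtain ⟨B, J, _, _, _, f, rfl, hf⟩ := h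
  obtain ⟨x, rfl⟩ := hx
  obtain ⟨y, rfl⟩ := hy
  refine hf ?_
  simp only [commComplex, Set.mem_singleton_iff, Set.iInter_iInter_eq_left, Set.mem_ofPred_eq]
  by_contra hempty
  rw [Set.not_nonempty_iff_eq_empty] at hempty
  exact hxy (determines_window f i x y (by simp [hempty]))

end Generates

section EvLang

variable {I : Type} [Fintype I] [DecidableEq I]

theorem decide_mem_mem_evLang_iff (s : Finset I) :
    (fun i => decide (i ∈ s)) ∈ EvLang I ↔ Even s.card := by
  simp [EvLang]

theorem connectedComplex_of_generates_evLang {K : Set (Set I)} (h : Generates K (EvLang I)) :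
    ConnectedComplex K := by
  classical
  rintro ⟨I₀, hne, hnu, hsplit⟩
  obtain ⟨k, hk⟩ := Set.nonempty_iff_ne_empty.2 hne
  obtain ⟨i, hi⟩ := (Set.ne_univ_iff_exists_notMem I₀).1 hnu
  have hki : k ≠ i := fun h => hi (h ▸ hk)
  have hsplice := h.piecewise_mem hsplit ((decide_mem_mem_evLang_iff ∅).2 (by simp))
    ((decide_mem_mem_evLang_iff {k, i}).2 (by simp [Finset.card_pair hki]))
  have hsingle : I₀.piecewise (fun j => decide (j ∈ (∅ : Finset I)))
      (fun j => decide (j ∈ ({k, i} : Finset I))) = fun j => decide (j ∈ ({i} : Finset I)) := by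
    funext j
    by_cases hj : j ∈ I₀
    · simp [hj, show j ≠ i by rintro rfl; exact hi hj]
    · simp [hj, show j ≠ k by rintro rfl; exact hj hk]
  rw [hsingle, decide_mem_mem_evLang_iff] at hsplice
  simp at hsplice

theorem singleton_mem_of_generates_evLang [Nontrivial I] {K : Set (Set I)}
    (h : Generates K (EvLang I)) (i : I) : {i} ∈ K := by
  obtain ⟨k, hki⟩ := exists_ne i
  exact h.singleton_mem (i := i) ((decide_mem_mem_evLang_iff ∅).2 (by simp))
    ((decide_mem_mem_evLang_iff {i, k}).2 (by simp [Finset.card_pair hki.symm])) (by simp)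

end EvLang

section Skeleton

variable {I : Type*} {K K' : Set (Set I)}

theorem ConnectedComplex.mono (hc : ConnectedComplex K) (hKK' : K ⊆ K') : ConnectedComplex K' :=
  fun ⟨I₀, hne, hnu, hsplit⟩ => hc ⟨I₀, hne, hnu, fun S hS => hsplit S (hKK' hS)⟩

theorem ConnectedComplex.nonempty [Nontrivial I] (hc : ConnectedComplex K) : K.Nonempty := by
  rw [Set.nonempty_iff_ne_empty]
  rintro rfl
  obtain ⟨a, b, hab⟩ := exists_pair_ne I
  refine hc ⟨{a}, Set.singleton_ne_empty a, fun h => hab ?_, by simp⟩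
  exact (Set.mem_singleton_iff.1 (Set.eq_univ_iff_forall.1 h b)).symm

theorem skeletonGraph_adj {a b : I} :
    (skeletonGraph K).Adj a b ↔ a ≠ b ∧ ({a, b} : Set I) ∈ K := by
  rw [skeletonGraph, SimpleGraph.fromRel_adj, Set.pair_comm b a, or_self]

theorem skeletonGraph_mono (hKK' : K ⊆ K') : skeletonGraph K ≤ skeletonGraph K' :=
  fun _ _ h => skeletonGraph_adj.2 ⟨(skeletonGraph_adj.1 h).1, hKK' (skeletonGraph_adj.1 h).2⟩

theorem connectedComplex_iff_preconnected (hK : IsComplex K) :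
    ConnectedComplex K ↔ (skeletonGraph K).Preconnected := by
  constructor
  · intro hc a b
    by_contra hab
    refine hc ⟨{c | (skeletonGraph K).Reachable a c}, Set.nonempty_iff_ne_empty.1 ⟨a, .rfl⟩,
      (Set.ne_univ_iff_exists_notMem _).2 ⟨b, hab⟩, fun S hS => ?_⟩
    by_contra! hcross
    obtain ⟨u, huS, hu⟩ := Set.not_subset.1 hcross.1
    obtain ⟨v, hvS, hv⟩ := Set.not_subset.1 hcross.2
    have huv : v ≠ u := fun h => hu (h ▸ not_not.1 hv)
    have hadj : (skeletonGraph K).Adj v u :=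
      skeletonGraph_adj.2 ⟨huv, hK S hS _ (Set.insert_subset hvS (Set.singleton_subset_iff.2 huS))⟩
    exact hu ((not_not.1 hv).trans hadj.reachable)
  · rintro hp ⟨I₀, hne, hnu, hsplit⟩
    obtain ⟨a, ha⟩ := Set.nonempty_iff_ne_empty.2 hne
    obtain ⟨b, hb⟩ := (Set.ne_univ_iff_exists_notMem I₀).1 hnu
    obtain ⟨d, -, hd, hd'⟩ := (hp a b).some.exists_boundary_dart I₀ ha hb
    rcases hsplit _ (skeletonGraph_adj.1 d.adj).2 with h | h
    · exact hd' (h (by simp))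
    · exact h (by simp) hd

theorem IsComplex.empty_mem (hK : IsComplex K) (hne : K.Nonempty) : ∅ ∈ K :=
  hne.elim fun S hS => hK S hS ∅ (Set.empty_subset S)

theorem isComplex_treeComplex (G : SimpleGraph I) : IsComplex (treeComplex G) := by
  rintro S (rfl | ⟨i, rfl⟩ | ⟨i, j, hij, rfl⟩) T hT
  · exact Or.inl (Set.subset_empty_iff.1 hT)
  · rcases Set.subset_singleton_iff_eq.1 hT with rfl | rfl
    exacts [Or.inl rfl, Or.inr (Or.inl ⟨i, rfl⟩)]
  · rcases Set.subset_pair_iff_eq.1 hT with rfl | rfl | rfl | rfl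
    exacts [Or.inl rfl, Or.inr (Or.inl ⟨i, rfl⟩), Or.inr (Or.inl ⟨j, rfl⟩),
      Or.inr (Or.inr ⟨i, j, hij, rfl⟩)]

theorem treeComplex_mono {G H : SimpleGraph I} (hGH : G ≤ H) : treeComplex G ⊆ treeComplex H := by
  rintro S (rfl | ⟨i, rfl⟩ | ⟨i, j, hij, rfl⟩)
  exacts [Or.inl rfl, Or.inr (Or.inl ⟨i, rfl⟩), Or.inr (Or.inr ⟨i, j, hGH hij, rfl⟩)]

theorem skeletonGraph_treeComplex (G : SimpleGraph I) : skeletonGraph (treeComplex G) = G := by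
  ext a b
  rw [skeletonGraph_adj]
  refine ⟨fun ⟨hab, hS⟩ => ?_, fun h => ⟨h.ne, Or.inr (Or.inr ⟨a, b, h, rfl⟩)⟩⟩
  rcases hS with h | ⟨i, h⟩ | ⟨i, j, hij, h⟩
  · exact absurd h (Set.insert_nonempty a {b}).ne_empty
  · have ha : a ∈ ({i} : Set I) := h ▸ Set.mem_insert a {b}
    have hb : b ∈ ({i} : Set I) := h ▸ Set.mem_insert_of_mem a rfl
    exact absurd (ha.trans hb.symm) hab
  · rcases (Set.pair_eq_pair_iff.1 h) with ⟨rfl, rfl⟩ | ⟨rfl, rfl⟩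
    exacts [hij, hij.symm]

theorem subset_treeComplex_skeletonGraph {G : SimpleGraph I} (hK : K ⊆ treeComplex G) :
    K ⊆ treeComplex (skeletonGraph K) := by
  intro S hS
  rcases hK hS with h | h | ⟨i, j, hij, rfl⟩
  exacts [Or.inl h, Or.inr (Or.inl h),
    Or.inr (Or.inr ⟨i, j, skeletonGraph_adj.2 ⟨hij.ne, hS⟩, rfl⟩)]

theorem treeComplex_skeletonGraph_subset (hempty : ∅ ∈ K) (hsingleton : ∀ i, {i} ∈ K) :
    treeComplex (skeletonGraph K) ⊆ K := by
  rintro S (rfl | ⟨i, rfl⟩ | ⟨i, j, hij, rfl⟩)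
  exacts [hempty, hsingleton i, (skeletonGraph_adj.1 hij).2]

theorem connectedComplex_treeComplex_iff {G : SimpleGraph I} :
    ConnectedComplex (treeComplex G) ↔ G.Preconnected := by
  rw [connectedComplex_iff_preconnected (isComplex_treeComplex G), skeletonGraph_treeComplex]

end Skeleton

namespace SimpleGraph

open Matrix

variable {I R : Type*} [Fintype I] [DecidableEq I] [CommRing R] (G : SimpleGraph I)
  [DecidableRel G.Adj]

theorem sum_incMatrix_mulVec [CharP R 2] (y : Sym2 I → R) : ∑ i, (G.incMatrix R *ᵥ y) i = 0 := by
  have hcol : ∀ e, ∑ i, G.incMatrix R i e = 0 := fun e => by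
    by_cases he : e ∈ G.edgeSet
    · rw [G.sum_incMatrix_apply_of_mem_edgeSet he, CharTwo.two_eq_zero]
    · exact G.sum_incMatrix_apply_of_notMem_edgeSet he
  simp only [mulVec, dotProduct]
  rw [Finset.sum_comm]
  simp [← Finset.sum_mul, hcol]

theorem incMatrix_mulVec_single_of_adj {a b : I} (h : G.Adj a b) :
    G.incMatrix R *ᵥ Pi.single s(a, b) 1 = Pi.single a 1 + Pi.single b 1 := by
  ext i
  simp only [mulVec_single_one, col_apply, incMatrix_apply', mk'_mem_incidenceSet_iff]
  rcases eq_or_ne i a with rfl | hia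
  · simp [h, h.ne.symm]
  · rcases eq_or_ne i b with rfl | hib
    · simp [h, hia]
    · simp [hia, hib]

theorem single_add_single_mem_range_incMatrix [CharP R 2] {a b : I} (h : G.Reachable a b) :
    Pi.single a 1 + Pi.single b 1 ∈ LinearMap.range (G.incMatrix R).mulVecLin := by
  obtain ⟨p⟩ := h
  induction p with
  | nil =>
    rw [← Pi.single_add, CharTwo.add_self_eq_zero, Pi.single_zero]
    exact zero_mem _
  | @cons u v w hadj _ ih =>
    have hstep : (Pi.single u 1 + Pi.single w 1 : I → R) =
        (Pi.single u 1 + Pi.single v 1) + (Pi.single v 1 + Pi.single w 1) := by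
      rw [add_assoc, ← add_assoc (Pi.single v 1), ← Pi.single_add, CharTwo.add_self_eq_zero,
        Pi.single_zero, zero_add]
    rw [hstep]
    exact Submodule.add_mem _ ⟨_, G.incMatrix_mulVec_single_of_adj hadj⟩ ih

theorem mem_range_incMatrix_iff [CharP R 2] (hG : G.Connected) (v : I → R) :
    v ∈ LinearMap.range (G.incMatrix R).mulVecLin ↔ ∑ i, v i = 0 := by
  refine ⟨fun ⟨y, hy⟩ => hy ▸ sum_incMatrix_mulVec G y, fun hv => ?_⟩
  obtain ⟨i₀⟩ := hG.nonempty
  have hdecomp : ∑ i, v i • (Pi.single i 1 + Pi.single i₀ 1) = v := by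
    simp only [smul_add, Finset.sum_add_distrib, ← Finset.sum_smul, hv, zero_smul, add_zero]
    simp only [← Pi.single_smul', smul_eq_mul, mul_one, Finset.univ_sum_single]
  rw [← hdecomp]
  exact Submodule.sum_mem _ fun i _ =>
    Submodule.smul_mem _ _ (single_add_single_mem_range_incMatrix G (hG.preconnected i i₀))

end SimpleGraph

section ParityMap

open Matrix

variable {I : Type} [Fintype I] [DecidableEq I]

/-- Inputs label all of `Sym2 I`, as Mathlib's incidence matrix has a column for every pair; the
columns of non-edges vanish, so no output reads them. -/
noncomputable def parityMap (G : SimpleGraph I) [DecidableRel G.Adj] :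
    (Sym2 I → ZMod 2) → I → Bool :=
  fun y i => decide ((G.incMatrix (ZMod 2) *ᵥ y) i = 1)

theorem mem_evLang_iff_sum_eq_zero (v : I → Bool) :
    v ∈ EvLang I ↔ ∑ i, (if v i then 1 else 0 : ZMod 2) = 0 := by
  rw [Finset.sum_boole, ZMod.natCast_eq_zero_iff_even, EvLang, Set.mem_ofPred_eq]

theorem decide_eq_one_eq_iff (c : ZMod 2) (b : Bool) :
    decide (c = 1) = b ↔ c = if b then 1 else 0 := by
  revert c b
  decide

variable (G : SimpleGraph I) [DecidableRel G.Adj]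

theorem range_parityMap (hG : G.Connected) : Set.range (parityMap G) = EvLang I := by
  ext v
  rw [mem_evLang_iff_sum_eq_zero, ← G.mem_range_incMatrix_iff hG]
  simp only [Set.mem_range, LinearMap.mem_range, Matrix.mulVecLin_apply, funext_iff, parityMap,
    decide_eq_one_eq_iff]

theorem window_parityMap_subset (i : I) : window (parityMap G) i ⊆ G.incidenceSet i := by
  refine window_subset_of_determines fun x y hxy => ?_
  simp only [parityMap, Matrix.mulVec, dotProduct]
  congr 2
  refine Finset.sum_congr rfl fun e _ => ?_
  by_cases he : e ∈ G.incidenceSet i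
  · rw [hxy e he]
  · simp [G.incMatrix_of_notMem_incidenceSet he]

theorem commComplex_parityMap_subset {K : Set (Set I)} (hK : IsComplex K) (hempty : ∅ ∈ K)
    (hGK : G ≤ skeletonGraph K) : commComplex (parityMap G) ⊆ K := by
  rintro S ⟨e, he⟩
  rcases S.eq_empty_or_nonempty with rfl | ⟨i, hi⟩
  · exact hempty
  have hinc : ∀ k ∈ S, e ∈ G.incidenceSet k :=
    fun k hk => window_parityMap_subset G k (Set.mem_iInter₂.1 he k hk)
  induction e using Sym2.ind with
  | _ a b =>
  have hab : G.Adj a b := (hinc i hi).1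
  refine hK _ (skeletonGraph_adj.1 (hGK hab)).2 S fun k hk => ?_
  simpa using ((G.mk'_mem_incidenceSet_iff).1 (hinc k hk)).2

theorem generates_evLang_of_connectedComplex [Nontrivial I] {K : Set (Set I)} (hK : IsComplex K)
    (hc : ConnectedComplex K) : Generates K (EvLang I) := by
  classical
  have hG : (skeletonGraph K).Connected := ⟨(connectedComplex_iff_preconnected hK).1 hc⟩
  exact ⟨ZMod 2, Sym2 I, inferInstance, inferInstance, inferInstance, parityMap (skeletonGraph K),
    range_parityMap _ hG, commComplex_parityMap_subset _ hK (hK.empty_mem hc.nonempty) le_rfl⟩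

end ParityMap

section Trees

variable {I : Type} [Fintype I] [DecidableEq I] [Nontrivial I]

theorem generates_evLang_iff_connectedComplex {K : Set (Set I)} (hK : IsComplex K) :
    Generates K (EvLang I) ↔ ConnectedComplex K :=
  ⟨connectedComplex_of_generates_evLang, generates_evLang_of_connectedComplex hK⟩

theorem treeComplex_skeletonGraph_subset_of_generates_evLang {K : Set (Set I)}
    (h : Generates K (EvLang I)) : treeComplex (skeletonGraph K) ⊆ K :=
  treeComplex_skeletonGraph_subset h.empty_mem (singleton_mem_of_generates_evLang h)

theorem generates_evLang_treeComplex {G : SimpleGraph I} (hG : G.Connected) :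
    Generates (treeComplex G) (EvLang I) :=
  (generates_evLang_iff_connectedComplex (isComplex_treeComplex G)).2
    (connectedComplex_treeComplex_iff.2 hG.preconnected)

/-- The edges of `G` used by `K` span a connected subgraph, which must be all of `G` since a tree
is a minimal connected graph. -/
theorem eq_treeComplex_of_generates_evLang {G : SimpleGraph I} (hG : G.IsTree)
    {K : Set (Set I)} (hKG : K ⊆ treeComplex G) (h : Generates K (EvLang I)) :
    K = treeComplex G := by
  have hle : skeletonGraph K ≤ G := (skeletonGraph_mono hKG).trans (skeletonGraph_treeComplex G).le
  have hconn : (skeletonGraph K).Connected :=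
    ⟨connectedComplex_treeComplex_iff.1
      ((connectedComplex_of_generates_evLang h).mono (subset_treeComplex_skeletonGraph hKG))⟩
  have heq : skeletonGraph K = G :=
    (SimpleGraph.isTree_iff_minimal_connected.1 hG).eq_of_le hconn hle
  exact hKG.antisymm (heq ▸ treeComplex_skeletonGraph_subset_of_generates_evLang h)

end Trees

/-- a simplicial complex generates `Ev_I` iff it is connected;
consequently the minimal complexes generating `Ev_I` are exactly the spanning
trees of `I`. -/
theorem stmt13 {I : Type} [Fintype I] [DecidableEq I] (h2 : 2 ≤ Fintype.card I)
    (K : Set (Set I)) (hK : IsComplex K) :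
    (Generates K (EvLang I) ↔ ConnectedComplex K) ∧
    ((Generates K (EvLang I) ∧ ∀ K' ⊆ K, Generates K' (EvLang I) → K' = K) ↔
      ∃ G : SimpleGraph I, G.IsTree ∧ K = treeComplex G) := by
  have : Nontrivial I := Fintype.one_lt_card_iff_nontrivial.1 h2
  refine ⟨generates_evLang_iff_connectedComplex hK, ⟨fun ⟨hgen, hmin⟩ => ?_, ?_⟩⟩
  · have hconn : (skeletonGraph K).Connected :=
      ⟨(connectedComplex_iff_preconnected hK).1 (connectedComplex_of_generates_evLang hgen)⟩
    obtain ⟨T, hTK, hT⟩ := hconn.exists_isTree_le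
    refine ⟨T, hT, (hmin _ ?_ (generates_evLang_treeComplex hT.1)).symm⟩
    exact (treeComplex_mono hTK).trans (treeComplex_skeletonGraph_subset_of_generates_evLang hgen)
  · rintro ⟨G, hG, rfl⟩
    exact ⟨generates_evLang_treeComplex hG.1,
      fun K' hK' hgen => eq_treeComplex_of_generates_evLang hG hK' hgen⟩
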